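/- arXiv:2208.03574 — 2 statements merged into one kernel-verified Lean document; each statement's English description precedes it below -/
import Mathlib

section
/- Let R, E, Q be real n×n matrices with R symmetric positive semidefinite, Q invertible, E Q⁻¹ symmetric positive semidefinite, and let μ > 0, α ∈ [0,1). If the block matrix [μE | (1−α)R] has rank n, then (1−α)R + μ E Q⁻¹ is positive definite, hence invertible. -/
open Matrix

theorem stmt7 {n : ℕ} (R E Q : Matrix (Fin n) (Fin n) ℝ)
    (hRsym : Rᵀ = R) (hR : ∀ x : Fin n → ℝ, 0 ≤ x ⬝ᵥ R.mulVec x)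
    (hQ : IsUnit Q.det)
    (hEQsym : (E * Q⁻¹)ᵀ = E * Q⁻¹)
    (hEQ : ∀ x : Fin n → ℝ, 0 ≤ x ⬝ᵥ (E * Q⁻¹).mulVec x)
    (mu : ℝ) (hmu : 0 < mu) (alpha : ℝ) (halpha : 0 ≤ alpha) (halpha1 : alpha < 1)
    (hrank : (Matrix.of (fun i => Sum.elim ((mu • E) i) (((1 - alpha) • R) i)) :
        Matrix (Fin n) (Fin n ⊕ Fin n) ℝ).rank = n) :
    (∀ x : Fin n → ℝ, x ≠ 0 → 0 < x ⬝ᵥ ((1 - alpha) • R + mu • (E * Q⁻¹)).mulVec x) ∧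
    IsUnit ((1 - alpha) • R + mu • (E * Q⁻¹)).det := by
  set B : Matrix (Fin n) (Fin n ⊕ Fin n) ℝ :=
    Matrix.of (fun i => Sum.elim ((mu • E) i) (((1 - alpha) • R) i)) with hB
  have h1a : (0:ℝ) < 1 - alpha := by linarith
  -- positive semidefiniteness structures
  have hRpsd : R.PosSemidef := by
    refine Matrix.posSemidef_iff_dotProduct_mulVec.mpr ⟨?_, ?_⟩
    · simpa [Matrix.IsHermitian] using hRsym
    · intro x; simpa using hR x
  have hEQpsd : (E * Q⁻¹).PosSemidef := by
    refine Matrix.posSemidef_iff_dotProduct_mulVec.mpr ⟨?_, ?_⟩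
    · simpa [Matrix.IsHermitian] using hEQsym
    · intro x; simpa using hEQ x
  -- injectivity of x ↦ x ᵥ* B from the rank condition
  have hrankT : Bᵀ.rank = n := by rw [Matrix.rank_transpose]; exact hrank
  have hker : ∀ x : Fin n → ℝ, Bᵀ *ᵥ x = 0 → x = 0 := by
    intro x hx
    have h := LinearMap.finrank_range_add_finrank_ker (Bᵀ.mulVecLin)
    rw [show Module.finrank ℝ (LinearMap.range Bᵀ.mulVecLin) = Bᵀ.rank from rfl,
        hrankT] at h
    have hfr : Module.finrank ℝ (Fin n → ℝ) = n := Module.finrank_fin_fun ℝ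
    rw [hfr] at h
    have hk0 : Module.finrank ℝ (LinearMap.ker Bᵀ.mulVecLin) = 0 := by omega
    have hbot : LinearMap.ker Bᵀ.mulVecLin = ⊥ :=
      Submodule.finrank_eq_zero.mp hk0
    have : x ∈ LinearMap.ker Bᵀ.mulVecLin := by
      exact hx
    rw [hbot] at this
    simpa using this
  -- key positivity
  have key : ∀ x : Fin n → ℝ, x ≠ 0 →
      0 < x ⬝ᵥ ((1 - alpha) • R + mu • (E * Q⁻¹)).mulVec x := by
    intro x hx
    have hRx := hR x
    have hEQx := hEQ x
    have hsum : x ⬝ᵥ ((1 - alpha) • R + mu • (E * Q⁻¹)).mulVec x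
        = (1 - alpha) * (x ⬝ᵥ R.mulVec x) + mu * (x ⬝ᵥ (E * Q⁻¹).mulVec x) := by
      simp [Matrix.add_mulVec, Matrix.smul_mulVec, dotProduct_add, dotProduct_smul,
        smul_eq_mul]
    have hnn : 0 ≤ x ⬝ᵥ ((1 - alpha) • R + mu • (E * Q⁻¹)).mulVec x := by
      rw [hsum]; positivity
    rcases lt_or_eq_of_le hnn with h | h
    · exact h
    -- equality case: derive contradiction
    exfalso
    have hzero : (1 - alpha) * (x ⬝ᵥ R.mulVec x) + mu * (x ⬝ᵥ (E * Q⁻¹).mulVec x) = 0 := by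
      rw [← hsum, ← h]
    have hR0 : x ⬝ᵥ R.mulVec x = 0 := by nlinarith
    have hEQ0 : x ⬝ᵥ (E * Q⁻¹).mulVec x = 0 := by nlinarith
    have hRx0 : R *ᵥ x = 0 := by
      have := (hRpsd.dotProduct_mulVec_zero_iff x).mp (by simpa using hR0)
      simpa using this
    have hEQx0 : (E * Q⁻¹) *ᵥ x = 0 := by
      have := (hEQpsd.dotProduct_mulVec_zero_iff x).mp (by simpa using hEQ0)
      simpa using this
    -- vecMul versions
    have hxR : x ᵥ* R = 0 := by
      rw [← hRsym, Matrix.vecMul_transpose]; exact hRx0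
    have hxEQ : x ᵥ* (E * Q⁻¹) = 0 := by
      rw [← hEQsym, Matrix.vecMul_transpose]; exact hEQx0
    have hxE : x ᵥ* E = 0 := by
      have hE : E = E * Q⁻¹ * Q := by
        rw [Matrix.mul_assoc, Matrix.nonsing_inv_mul Q hQ, Matrix.mul_one]
      rw [hE, ← Matrix.vecMul_vecMul, hxEQ, Matrix.zero_vecMul]
    -- x is in kernel of Bᵀ
    have hBx : Bᵀ *ᵥ x = 0 := by
      funext j
      rw [← Matrix.vecMul_transpose, Matrix.transpose_transpose]
      cases j with
      | inl k =>
        have : (x ᵥ* B) (Sum.inl k) = mu * ((x ᵥ* E) k) := by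
          simp [Matrix.vecMul, dotProduct, hB, Finset.mul_sum]
          ring_nf
          congr 1; funext i; ring
        rw [this, hxE]; simp
      | inr k =>
        have : (x ᵥ* B) (Sum.inr k) = (1 - alpha) * ((x ᵥ* R) k) := by
          simp [Matrix.vecMul, dotProduct, hB, Finset.mul_sum]
          ring_nf
          congr 1; funext i; ring
        rw [this, hxR]; simp
    exact hx (hker x hBx)
  refine ⟨key, ?_⟩
  -- positive definite ⇒ det ≠ 0
  have hpd : ((1 - alpha) • R + mu • (E * Q⁻¹)).PosDef := by
    refine Matrix.posDef_iff_dotProduct_mulVec.mpr ⟨?_, ?_⟩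
    · have ht : ((1 - alpha) • R + mu • (E * Q⁻¹))ᵀ = (1 - alpha) • R + mu • (E * Q⁻¹) := by
        simp [Matrix.transpose_add, Matrix.transpose_smul, hRsym, hEQsym]
      simpa [Matrix.IsHermitian] using ht
    · intro x hx
      simpa using key x hx
  have := hpd.det_pos
  exact isUnit_iff_ne_zero.mpr (ne_of_gt this)
end

section
/- Let M, N, Q be maps on a vector space X with Q invertible linear, and λ ≠ 0 a scalar such that I + λNQ⁻¹ and I + λMQ⁻¹ are bijective on X. Then for x ∈ X, the equation Mx + Nx = 0 holds if and only if Qx is a fixed point of the map (I + λMQ⁻¹)⁻¹(I − λNQ⁻¹)(I + λNQ⁻¹)⁻¹(I − λMQ⁻¹), i.e. x = Q⁻¹(I + λMQ⁻¹)⁻¹(I − λNQ⁻¹)(I + λNQ⁻¹)⁻¹(I − λMQ⁻¹)Qx. -/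
/-!
Absorb `λ` and `Q⁻¹` into the maps `F = λ • M ∘ Q⁻¹`, `G = λ • N ∘ Q⁻¹` and put `z = Q x`. With
`A = I + F` and `B = I + G`, the reflections `I - F = 2I - A` and `I - G = 2I - B` make the
composite fix `z` exactly when `b = B⁻¹ (I - F) z` satisfies `A z = (I - G) b` and
`B b = (I - F) z`. Adding and subtracting these two equations gives `2 (F z + G b) = 0` and
`2 (z - b) = 0`, so in a group without `2`-torsion `b = z` and `F z + G z = 0`; conversely, if
`G z = -F z` then every step of the composite maps `z` to itself.
-/

section PeacemanRachford

variable {X : Type*} [AddCommGroup X] {F G R S : X → X} {z : X}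

theorem eq_and_add_eq_zero_of_reflected_eqs [IsAddTorsionFree X] {b : X}
    (hA : z + F z = b - G b) (hB : b + G b = z - F z) : b = z ∧ F z + G b = 0 := by
  constructor
  · refine nsmul_right_injective two_ne_zero ?_
    linear_combination (norm := module) hB - hA
  · refine nsmul_right_injective (M := X) two_ne_zero ?_
    linear_combination (norm := module) hA + hB

theorem add_eq_zero_of_eq_peacemanRachford [IsAddTorsionFree X]
    (hR : ∀ y, R y + F (R y) = y) (hS : ∀ y, S y + G (S y) = y)
    (hz : z = R (S (z - F z) - G (S (z - F z)))) : F z + G z = 0 := by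
  set b := S (z - F z)
  have hA : z + F z = b - G b := by rw [hz]; exact hR _
  obtain ⟨hbz, hsum⟩ := eq_and_add_eq_zero_of_reflected_eqs hA (hS _)
  rwa [hbz] at hsum

theorem eq_peacemanRachford_of_add_eq_zero
    (hR : ∀ y, R (y + F y) = y) (hS : ∀ y, S (y + G y) = y)
    (h : F z + G z = 0) : z = R (S (z - F z) - G (S (z - F z))) := by
  have hG : G z = -F z := eq_neg_of_add_eq_zero_right h
  have hSz : S (z - F z) = z := by simpa [hG, ← sub_eq_add_neg] using hS z
  rw [hSz, hG, sub_neg_eq_add, hR]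

end PeacemanRachford

theorem stmt14 {X : Type*} [AddCommGroup X] [Module ℝ X]
    (Q : X ≃ₗ[ℝ] X) (M N : X → X)
    (lam : ℝ) (hlam : lam ≠ 0)
    (P₁inv P₂inv : X → X)
    (hP₁₁ : ∀ x : X, P₁inv x + lam • M (Q.symm (P₁inv x)) = x)
    (hP₁₂ : ∀ x : X, P₁inv (x + lam • M (Q.symm x)) = x)
    (hP₂₁ : ∀ x : X, P₂inv x + lam • N (Q.symm (P₂inv x)) = x)
    (hP₂₂ : ∀ x : X, P₂inv (x + lam • N (Q.symm x)) = x)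
    (x : X) :
    M x + N x = 0 ↔
      x = Q.symm (P₁inv
        ((fun y => y - lam • N (Q.symm y))
          (P₂inv ((fun y => y - lam • M (Q.symm y)) (Q x))))) := by
  have := IsAddTorsionFree.of_isTorsionFree ℝ X
  set F : X → X := fun y => lam • M (Q.symm y)
  set G : X → X := fun y => lam • N (Q.symm y)
  have hsum : M x + N x = 0 ↔ F (Q x) + G (Q x) = 0 := by
    simp only [F, G, ← smul_add, smul_eq_zero_iff_right hlam, Q.symm_apply_apply]
  rw [hsum, LinearEquiv.eq_symm_apply]
  exact ⟨eq_peacemanRachford_of_add_eq_zero hP₁₂ hP₂₂,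
    add_eq_zero_of_eq_peacemanRachford (F := F) (G := G) hP₁₁ hP₂₁⟩
end
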